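/- arXiv:2405.20464 — 4 statements merged into one kernel-verified Lean document; each statement's English description precedes it below -/
import Mathlib

section
/- Fix n ≥ 1 and equip ℝⁿ with its standard Euclidean inner product ⟨·,·⟩, so that Q_{n,0}(ξ) = ⟨ξ, ξ⟩. There is a surjective group homomorphism ρ : Pin_{n,0} → O(n), where O(n) is the group of linear isometric automorphisms of Euclidean ℝⁿ, such that for every ξ ∈ ℝⁿ with Q_{n,0}(ξ) = 1 the isometry ρ(ι(ξ)) is the reflection η ↦ η − 2⟨ξ, η⟩ ξ in the hyperplane orthogonal to ξ, and the kernel of ρ is exactly {1, −1}. Thus Pin_{n,0} is a double cover of the orthogonal group O(n). -/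
noncomputable section
open CliffordAlgebra

/-- The diagonal quadratic form on `ℝⁿ` whose first `p` coefficients are `+1`
and whose remaining coefficients are `-1`; for `n = p + q` this is `Q_{p,q}`. -/
def Qsig (n p : ℕ) : QuadraticForm ℝ (Fin n → ℝ) :=
  QuadraticMap.weightedSumSquares ℝ (fun i : Fin n => if (i : ℕ) < p then (1 : ℝ) else -1)

/-- The Pin group of a real quadratic form `Q`: the subgroup of the unit group of the
Clifford algebra generated by the units whose value is `ι Q ξ` for some vector `ξ`
with `Q ξ = 1` or `Q ξ = -1`. -/
def pinGrp {V : Type*} [AddCommGroup V] [Module ℝ V] (Q : QuadraticForm ℝ V) :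
    Subgroup (CliffordAlgebra Q)ˣ :=
  Subgroup.closure {u : (CliffordAlgebra Q)ˣ |
    ∃ ξ : V, (↑u : CliffordAlgebra Q) = ι Q ξ ∧ (Q ξ = 1 ∨ Q ξ = -1)}

/-!
The twisted adjoint action `ι v ↦ involute u * ι v * u⁻¹` sends a generator `ι ξ` with `Q ξ = 1`
to the reflection in `ξᗮ`, so it maps `Pin` into the orthogonal group, onto the subgroup generated
by reflections, which is everything by Cartan–Dieudonné. If `u` acts trivially, then
`ι v * u = involute u * ι v` for all `v`, i.e. every contraction of `u` vanishes. Transported to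
the exterior algebra, where the number operator `∑ eᵢ ∧ ι(eᵢ*)` acts on `⋀ᵏ` by `k`, this forces
`u` to be a scalar `r`; and `reverse u * u = ±1` on `Pin` gives `r = ±1`.
-/

theorem DirectSum.Decomposition.ker_le_of_forall_mem_eq_smul {ι K M : Type*}
    [DecidableEq ι] [Field K] [AddCommGroup M] [Module K M] (ℳ : ι → Submodule K M)
    [DirectSum.Decomposition ℳ] (f : M →ₗ[K] M) (c : ι → K) (hf : ∀ k, ∀ m ∈ ℳ k, f m = c k • m)
    {i : ι} (hc : ∀ k ≠ i, c k ≠ 0) : LinearMap.ker f ≤ ℳ i := by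
  classical
  have decompose_map : ∀ x k, (decompose ℳ (f x) k : M) = c k • (decompose ℳ x k : M) := by
    refine DirectSum.Decomposition.inductionOn ℳ (by simp) (fun {j} m k => ?_) ?_
    · rw [hf j m m.2, decompose_smul, decompose_coe, DirectSum.smul_apply]
      by_cases hjk : j = k
      · subst hjk; rw [DirectSum.of_eq_same]; rfl
      · rw [DirectSum.of_eq_of_ne _ _ _ (Ne.symm hjk)]; simp
    · intro x y hx hy k
      simp [decompose_add, hx, hy]
  intro x hx
  rw [← DirectSum.sum_support_decompose ℳ x]
  refine sum_mem fun k _ => ?_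
  by_cases hki : k = i
  · exact hki ▸ (decompose ℳ x k).2
  · have h := decompose_map x k
    rw [LinearMap.mem_ker.mp hx, decompose_zero] at h
    rw [(smul_eq_zero.mp h.symm).resolve_left (hc k hki)]
    exact zero_mem _

namespace ExteriorAlgebra

variable {R M κ : Type*} [CommRing R] [AddCommGroup M] [Module R M] [Fintype κ]

def numberOperator (b : Module.Basis κ R M) : ExteriorAlgebra R M →ₗ[R] ExteriorAlgebra R M :=
  ∑ i, LinearMap.mulLeft R (ι R (b i)) ∘ₗ contractLeft (b.coord i)

theorem numberOperator_ι_mul (b : Module.Basis κ R M) (v : M) (y : ExteriorAlgebra R M) :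
    numberOperator b (ι R v * y) = ι R v * y + ι R v * numberOperator b y := by
  simp only [numberOperator, LinearMap.sum_apply, LinearMap.comp_apply, LinearMap.mulLeft_apply,
    contractLeft_ι_mul, mul_sub, Finset.sum_sub_distrib, mul_smul_comm, Finset.mul_sum]
  have h_expand : ∑ i, b.coord i v • (ι R (b i) * y) = ι R v * y := by
    simp_rw [← smul_mul_assoc, ← map_smul, Module.Basis.coord_apply]
    rw [← Finset.sum_mul, ← map_sum, b.sum_repr]
  have h_swap : ∀ i, ι R (b i) * (ι R v * contractLeft (b.coord i) y)
      = -(ι R v * (ι R (b i) * contractLeft (b.coord i) y)) :=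
    fun i => ι_mul_ι_mul_of_isOrtho _ (.all _ _)
  rw [h_expand, Finset.sum_congr rfl fun i _ => h_swap i, Finset.sum_neg_distrib, sub_neg_eq_add]

theorem numberOperator_of_mem_exteriorPower (b : Module.Basis κ R M) (k : ℕ)
    {y : ExteriorAlgebra R M} (hy : y ∈ ⋀[R]^k M) : numberOperator b y = (k : R) • y := by
  induction k generalizing y with
  | zero =>
    rw [ExteriorAlgebra.exteriorPower, pow_zero, Submodule.one_eq_range] at hy
    obtain ⟨r, rfl⟩ := hy
    simp [numberOperator, Algebra.linearMap_apply]
  | succ k ih =>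
    rw [ExteriorAlgebra.exteriorPower, pow_succ'] at hy
    refine Submodule.mul_induction_on hy ?_ fun a b ha hb => ?_
    · rintro _ ⟨v, rfl⟩ z hz
      rw [numberOperator_ι_mul, ih hz, mul_smul_comm, Nat.cast_succ, add_smul, one_smul, add_comm]
    · rw [map_add, ha, hb, smul_add]

theorem mem_range_algebraMap_of_forall_contractLeft_eq_zero {K V : Type*} [Field K] [CharZero K]
    [AddCommGroup V] [Module K V] [FiniteDimensional K V] {x : ExteriorAlgebra K V}
    (hx : ∀ d : Module.Dual K V, contractLeft d x = 0) :
    x ∈ Set.range (algebraMap K (ExteriorAlgebra K V)) := by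
  let b := Module.finBasis K V
  have h_ker : x ∈ LinearMap.ker (numberOperator b) := by
    simp [numberOperator, LinearMap.sum_apply, hx]
  have h_deg_zero := DirectSum.Decomposition.ker_le_of_forall_mem_eq_smul (fun k => ⋀[K]^k V)
    (numberOperator b) (fun k => (k : K)) (fun k _ => numberOperator_of_mem_exteriorPower b k)
    (fun k hk => Nat.cast_ne_zero.mpr hk) h_ker
  rw [ExteriorAlgebra.exteriorPower, pow_zero, Submodule.one_eq_range] at h_deg_zero
  exact h_deg_zero

end ExteriorAlgebra

namespace CliffordAlgebra

variable {R M : Type*} [CommRing R] [AddCommGroup M] [Module R M] {Q : QuadraticForm R M}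

theorem ι_injective [Invertible (2 : R)] : Function.Injective (ι Q) := fun a b hab => by
  have h := congrArg (equivExterior Q) hab
  simp only [equivExterior, changeFormEquiv_apply, changeForm_ι] at h
  exact (ExteriorAlgebra.ι_inj R a b).mp h

theorem ι_mul_sub_involute_mul_ι (v : M) (x : CliffordAlgebra Q) :
    ι Q v * x - involute x * ι Q v = contractLeft (QuadraticMap.polarBilin Q v) x := by
  induction x using CliffordAlgebra.left_induction with
  | algebraMap r => rw [AlgHom.commutes, Algebra.commutes, sub_self, contractLeft_algebraMap]
  | add x y hx hy => rw [map_add, map_add, mul_add, add_mul, add_sub_add_comm, hx, hy]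
  | ι_mul a m ih =>
    have h_swap : ι Q v * ι Q m + ι Q m * ι Q v = algebraMap R _ (QuadraticMap.polar Q v m) :=
      ι_mul_ι_add_swap v m
    rw [map_mul, involute_ι, contractLeft_ι_mul, QuadraticMap.polarBilin_apply_apply,
      Algebra.smul_def, ← h_swap, ← ih]
    noncomm_ring

def IsTwistedAdjoint (u : CliffordAlgebra Q) (f : M → M) : Prop :=
  ∀ v, involute u * ι Q v = ι Q (f v) * u

theorem IsTwistedAdjoint.mul {x y : CliffordAlgebra Q} {f g : M → M} (hf : IsTwistedAdjoint x f)
    (hg : IsTwistedAdjoint y g) : IsTwistedAdjoint (x * y) (f ∘ g) := fun v => by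
  rw [map_mul, mul_assoc, hg v, ← mul_assoc, hf (g v), mul_assoc, Function.comp_apply]

theorem IsTwistedAdjoint.unique [Invertible (2 : R)] {u : CliffordAlgebra Q} (hu : IsUnit u)
    {f g : M → M} (hf : IsTwistedAdjoint u f) (hg : IsTwistedAdjoint u g) : f = g :=
  funext fun v => ι_injective <| hu.mul_left_injective <| (hf v).symm.trans (hg v)

theorem isTwistedAdjoint_ι {ξ : M} (hξ : Q ξ = 1) :
    IsTwistedAdjoint (ι Q ξ) fun v => v - QuadraticMap.polar Q ξ v • ξ := fun v => by
  rw [involute_ι, map_sub, map_smul, sub_mul, smul_mul_assoc, ι_sq_scalar, hξ, map_one,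
    ← Algebra.algebraMap_eq_smul_one, ← ι_mul_ι_add_swap ξ v]
  noncomm_ring

theorem IsTwistedAdjoint.mem_range_algebraMap_of_id {K V : Type*} [Field K] [CharZero K]
    [AddCommGroup V] [Module K V] [FiniteDimensional K V] {Q : QuadraticForm K V}
    (hQ : (QuadraticMap.polarBilin Q).Nondegenerate) {x : CliffordAlgebra Q}
    (hx : IsTwistedAdjoint x id) : x ∈ Set.range (algebraMap K (CliffordAlgebra Q)) := by
  have h_contract : ∀ d : Module.Dual K V, contractLeft d x = 0 := by
    intro d
    obtain ⟨v, rfl⟩ := (LinearMap.BilinForm.toDual _ hQ).surjective d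
    change contractLeft (QuadraticMap.polarBilin Q v) x = 0
    rw [← ι_mul_sub_involute_mul_ι, sub_eq_zero]
    exact (hx v).symm
  obtain ⟨r, hr⟩ := ExteriorAlgebra.mem_range_algebraMap_of_forall_contractLeft_eq_zero
    (x := equivExterior Q x) fun d => by
      rw [equivExterior, changeFormEquiv_apply, ← changeForm_contractLeft, h_contract, map_zero]
  refine ⟨r, (equivExterior Q).injective ?_⟩
  rw [← hr, equivExterior, changeFormEquiv_apply, changeForm_algebraMap]

end CliffordAlgebra

theorem QuadraticMap.Anisotropic.polarBilin_nondegenerate {R M : Type*} [CommRing R]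
    [Invertible (2 : R)] [AddCommGroup M] [Module R M] {Q : QuadraticForm R M}
    (hQ : Q.Anisotropic) : (QuadraticMap.polarBilin Q).Nondegenerate := by
  refine (LinearMap.IsRefl.nondegenerate_iff_separatingLeft fun x y h => ?_).mpr fun x hx => ?_
  · rwa [QuadraticMap.polarBilin_apply_apply, QuadraticMap.polar_comm,
      ← QuadraticMap.polarBilin_apply_apply]
  · refine hQ x ((isUnit_of_invertible (2 : R)).mul_right_eq_zero.mp ?_)
    rw [two_mul, ← two_nsmul, ← QuadraticMap.polar_self, ← QuadraticMap.polarBilin_apply_apply,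
      hx x]

section Pin

variable {V : Type*} [AddCommGroup V] [Module ℝ V] {Q : QuadraticForm ℝ V}

def pinGenerators (Q : QuadraticForm ℝ V) : Set (CliffordAlgebra Q)ˣ :=
  {u | ∃ ξ : V, (↑u : CliffordAlgebra Q) = ι Q ξ ∧ (Q ξ = 1 ∨ Q ξ = -1)}

theorem inv_mem_pinGenerators {u : (CliffordAlgebra Q)ˣ} (hu : u ∈ pinGenerators Q) :
    u⁻¹ ∈ pinGenerators Q := by
  obtain ⟨ξ, hu, hξ⟩ := hu
  have h_sq : Q ξ * Q ξ = 1 := by rcases hξ with h | h <;> rw [h] <;> norm_num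
  refine ⟨Q ξ • ξ, Units.inv_eq_of_mul_eq_one_right ?_, ?_⟩
  · rw [hu, map_smul, mul_smul_comm, ι_sq_scalar, Algebra.smul_def, ← map_mul, h_sq, map_one]
  · rwa [QuadraticMap.map_smul, smul_eq_mul, h_sq, one_mul]

theorem reverse_mul_self_of_mem_pinGrp {u : (CliffordAlgebra Q)ˣ} (hu : u ∈ pinGrp Q) :
    reverse (u : CliffordAlgebra Q) * u = 1 ∨ reverse (u : CliffordAlgebra Q) * u = -1 := by
  have h_gen : ∀ x ∈ pinGenerators Q,
      reverse (x : CliffordAlgebra Q) * x = 1 ∨ reverse (x : CliffordAlgebra Q) * x = -1 := by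
    rintro x ⟨ξ, hx, hξ⟩
    rw [hx, reverse_ι, ι_sq_scalar]
    rcases hξ with h | h <;> simp [h]
  induction hu using Subgroup.closure_induction'' with
  | mem x hx => exact h_gen x hx
  | inv_mem x hx => exact h_gen _ (inv_mem_pinGenerators hx)
  | one => simp
  | mul x y _ _ hx hy =>
    rw [Units.val_mul, reverse.map_mul, mul_assoc, ← mul_assoc (reverse (x : CliffordAlgebra Q))]
    rcases hx with h | h <;> rcases hy with h' | h' <;> simp [h, h']

theorem coe_eq_one_or_neg_one_of_isTwistedAdjoint_id [FiniteDimensional ℝ V]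
    (hQ : (QuadraticMap.polarBilin Q).Nondegenerate) {u : (CliffordAlgebra Q)ˣ}
    (hu : u ∈ pinGrp Q) (h : IsTwistedAdjoint (u : CliffordAlgebra Q) id) :
    (u : CliffordAlgebra Q) = 1 ∨ (u : CliffordAlgebra Q) = -1 := by
  obtain ⟨r, hr⟩ := h.mem_range_algebraMap_of_id hQ
  have h_norm := reverse_mul_self_of_mem_pinGrp hu
  rw [← hr, reverse.commutes, ← map_mul, ← map_one (algebraMap ℝ (CliffordAlgebra Q)), ← map_neg,
    (algebraMap ℝ (CliffordAlgebra Q)).injective.eq_iff,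
    (algebraMap ℝ (CliffordAlgebra Q)).injective.eq_iff] at h_norm
  rw [← hr]
  rcases h_norm with h | h
  · rcases mul_self_eq_one_iff.mp h with rfl | rfl <;> simp
  · nlinarith [mul_self_nonneg r]

end Pin

theorem Submodule.reflection_orthogonal_singleton_apply_of_norm_eq_one {E : Type*}
    [NormedAddCommGroup E] [InnerProductSpace ℝ E] {a : E} (ha : ‖a‖ = 1) (b : E) :
    (ℝ ∙ a)ᗮ.reflection b = b - (2 * inner ℝ a b) • a := by
  rw [Submodule.reflection_orthogonal_apply, Submodule.reflection_singleton_apply, ha]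
  simp only [RCLike.ofReal_real_eq_id, id, one_pow, div_one, neg_sub, two_smul, two_mul, add_smul]

section Euclidean

open Submodule

variable {V E : Type*} [AddCommGroup V] [Module ℝ V] [NormedAddCommGroup E] [InnerProductSpace ℝ E]
  {Q : QuadraticForm ℝ V} (e : V ≃ₗ[ℝ] E)

theorem polar_eq_two_mul_inner (hQ : ∀ v, Q v = ‖e v‖ ^ 2) (v w : V) :
    QuadraticMap.polar Q v w = 2 * inner ℝ (e v) (e w) := by
  rw [QuadraticMap.polar, hQ, hQ, hQ, map_add, norm_add_sq_real]
  ring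

theorem norm_apply_eq_one (hQ : ∀ v, Q v = ‖e v‖ ^ 2) {ξ : V} (hξ : Q ξ = 1) : ‖e ξ‖ = 1 := by
  rw [← pow_eq_one_iff_of_nonneg (norm_nonneg _) two_ne_zero, ← hQ, hξ]

theorem isTwistedAdjoint_ι_reflection (hQ : ∀ v, Q v = ‖e v‖ ^ 2) {ξ : V} (hξ : Q ξ = 1) :
    IsTwistedAdjoint (ι Q ξ) fun v => e.symm ((ℝ ∙ e ξ)ᗮ.reflection (e v)) := by
  convert isTwistedAdjoint_ι hξ using 2 with v
  rw [reflection_orthogonal_singleton_apply_of_norm_eq_one (norm_apply_eq_one e hQ hξ),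
    polar_eq_two_mul_inner e hQ]
  simp

theorem exists_isTwistedAdjoint_isometry (hQ : ∀ v, Q v = ‖e v‖ ^ 2) {u : (CliffordAlgebra Q)ˣ}
    (hu : u ∈ pinGrp Q) :
    ∃ f : E ≃ₗᵢ[ℝ] E, IsTwistedAdjoint (u : CliffordAlgebra Q) fun v => e.symm (f (e v)) := by
  have h_gen : ∀ x ∈ pinGenerators Q,
      ∃ f : E ≃ₗᵢ[ℝ] E, IsTwistedAdjoint (x : CliffordAlgebra Q) fun v => e.symm (f (e v)) := by
    rintro x ⟨ξ, hx, hξ | hξ⟩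
    · exact ⟨_, hx ▸ isTwistedAdjoint_ι_reflection e hQ hξ⟩
    · exfalso
      nlinarith [hQ ξ, sq_nonneg ‖e ξ‖]
  induction hu using Subgroup.closure_induction'' with
  | mem x hx => exact h_gen x hx
  | inv_mem x hx => exact h_gen _ (inv_mem_pinGenerators hx)
  | one => exact ⟨1, fun v => by simp⟩
  | mul x y _ _ hx hy =>
    obtain ⟨f, hf⟩ := hx
    obtain ⟨g, hg⟩ := hy
    exact ⟨f * g, by simpa [Function.comp_def] using hf.mul hg⟩

theorem eq_of_isTwistedAdjoint_isometry {u : (CliffordAlgebra Q)ˣ} {f g : E ≃ₗᵢ[ℝ] E}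
    (hf : IsTwistedAdjoint (u : CliffordAlgebra Q) fun v => e.symm (f (e v)))
    (hg : IsTwistedAdjoint (u : CliffordAlgebra Q) fun v => e.symm (g (e v))) : f = g := by
  ext x
  simpa using congrFun (hf.unique u.isUnit hg) (e.symm x)

def pinToOrthogonal (hQ : ∀ v, Q v = ‖e v‖ ^ 2) : pinGrp Q →* (E ≃ₗᵢ[ℝ] E) :=
  MonoidHom.mk' (fun u => (exists_isTwistedAdjoint_isometry e hQ u.2).choose) fun a b => by
    have spec (u : pinGrp Q) := (exists_isTwistedAdjoint_isometry e hQ u.2).choose_spec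
    exact eq_of_isTwistedAdjoint_isometry e (spec (a * b))
      (by simpa [Function.comp_def] using (spec a).mul (spec b))

theorem isTwistedAdjoint_pinToOrthogonal (hQ : ∀ v, Q v = ‖e v‖ ^ 2) (u : pinGrp Q) :
    IsTwistedAdjoint ((u : (CliffordAlgebra Q)ˣ) : CliffordAlgebra Q)
      fun v => e.symm (pinToOrthogonal e hQ u (e v)) :=
  (exists_isTwistedAdjoint_isometry e hQ u.2).choose_spec

theorem pinToOrthogonal_eq_of_isTwistedAdjoint (hQ : ∀ v, Q v = ‖e v‖ ^ 2) {u : pinGrp Q}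
    {f : E ≃ₗᵢ[ℝ] E}
    (hf : IsTwistedAdjoint ((u : (CliffordAlgebra Q)ˣ) : CliffordAlgebra Q)
      fun v => e.symm (f (e v))) : pinToOrthogonal e hQ u = f :=
  eq_of_isTwistedAdjoint_isometry e (isTwistedAdjoint_pinToOrthogonal e hQ u) hf

theorem pinToOrthogonal_of_coe_eq_ι (hQ : ∀ v, Q v = ‖e v‖ ^ 2) {u : pinGrp Q} {ξ : V}
    (hu : ((u : (CliffordAlgebra Q)ˣ) : CliffordAlgebra Q) = ι Q ξ) (hξ : Q ξ = 1) :
    pinToOrthogonal e hQ u = (ℝ ∙ e ξ)ᗮ.reflection :=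
  pinToOrthogonal_eq_of_isTwistedAdjoint e hQ (hu ▸ isTwistedAdjoint_ι_reflection e hQ hξ)

theorem pinToOrthogonal_surjective [FiniteDimensional ℝ E] (hQ : ∀ v, Q v = ‖e v‖ ^ 2) :
    Function.Surjective (pinToOrthogonal e hQ) := by
  rw [← MonoidHom.range_eq_top, eq_top_iff, ← LinearIsometryEquiv.reflections_generate,
    Subgroup.closure_le]
  rintro _ ⟨w, rfl⟩
  dsimp only [SetLike.mem_coe]
  rcases eq_or_ne w 0 with rfl | hw
  · have h_one : (ℝ ∙ (0 : E))ᗮ.reflection = 1 := by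
      ext x
      exact reflection_mem_subspace_eq_self (by simp)
    rw [h_one]
    exact one_mem _
  set ξ := e.symm (‖w‖⁻¹ • w)
  have hξ : Q ξ = 1 := by simp [ξ, hQ, norm_smul, hw]
  have h_sq : ι Q ξ * ι Q ξ = 1 := by rw [ι_sq_scalar, hξ, map_one]
  let u : (CliffordAlgebra Q)ˣ := ⟨ι Q ξ, ι Q ξ, h_sq, h_sq⟩
  have hu : u ∈ pinGrp Q := Subgroup.subset_closure ⟨ξ, rfl, Or.inl hξ⟩
  refine ⟨⟨u, hu⟩, (pinToOrthogonal_of_coe_eq_ι e hQ rfl hξ).trans ?_⟩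
  congr 2
  simpa [ξ] using span_singleton_smul_eq (inv_ne_zero (norm_ne_zero_iff.mpr hw)).isUnit w

theorem pinToOrthogonal_eq_one_iff [FiniteDimensional ℝ E] (hQ : ∀ v, Q v = ‖e v‖ ^ 2)
    (u : pinGrp Q) :
    pinToOrthogonal e hQ u = 1 ↔
      ((u : (CliffordAlgebra Q)ˣ) : CliffordAlgebra Q) = 1 ∨
        ((u : (CliffordAlgebra Q)ˣ) : CliffordAlgebra Q) = -1 := by
  have : FiniteDimensional ℝ V := Module.Finite.equiv e.symm
  have h_aniso : Q.Anisotropic := fun v hv => by simpa [hQ] using hv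
  constructor
  · intro h
    have h_id := isTwistedAdjoint_pinToOrthogonal e hQ u
    rw [h] at h_id
    exact coe_eq_one_or_neg_one_of_isTwistedAdjoint_id h_aniso.polarBilin_nondegenerate u.2
      (by simpa using h_id : IsTwistedAdjoint _ fun v => v)
  · rintro (h | h) <;> refine pinToOrthogonal_eq_of_isTwistedAdjoint e hQ fun v => ?_ <;>
      simp [h]

end Euclidean

theorem Qsig_apply_eq_norm_sq (n : ℕ) (v : Fin n → ℝ) : Qsig n n v = ‖WithLp.toLp 2 v‖ ^ 2 := by
  rw [EuclideanSpace.real_norm_sq_eq]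
  simp [Qsig, QuadraticMap.weightedSumSquares_apply, sq]

theorem pinPlus_double_covers_On_general (n : ℕ) :
    ∃ ρ : pinGrp (Qsig n n) →* (EuclideanSpace ℝ (Fin n) ≃ₗᵢ[ℝ] EuclideanSpace ℝ (Fin n)),
      Function.Surjective ρ ∧
      (∀ (u : pinGrp (Qsig n n)) (ξ : Fin n → ℝ),
        ((u : (CliffordAlgebra (Qsig n n))ˣ) : CliffordAlgebra (Qsig n n)) = ι (Qsig n n) ξ →
        Qsig n n ξ = 1 →
        ∀ η : Fin n → ℝ,
          ρ u ((WithLp.equiv 2 (Fin n → ℝ)).symm η) =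
            (WithLp.equiv 2 (Fin n → ℝ)).symm (η - (2 * ∑ i, ξ i * η i) • ξ)) ∧
      (∀ u : pinGrp (Qsig n n),
        ρ u = 1 ↔
          (((u : (CliffordAlgebra (Qsig n n))ˣ) : CliffordAlgebra (Qsig n n)) = 1 ∨
           ((u : (CliffordAlgebra (Qsig n n))ˣ) : CliffordAlgebra (Qsig n n)) = -1)) := by
  let e := (WithLp.linearEquiv 2 ℝ (Fin n → ℝ)).symm
  have hQ : ∀ v, Qsig n n v = ‖e v‖ ^ 2 := Qsig_apply_eq_norm_sq n
  refine ⟨pinToOrthogonal e hQ, pinToOrthogonal_surjective e hQ, fun u ξ hu hξ η => ?_,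
    pinToOrthogonal_eq_one_iff e hQ⟩
  rw [pinToOrthogonal_of_coe_eq_ι e hQ hu hξ,
    Submodule.reflection_orthogonal_singleton_apply_of_norm_eq_one (norm_apply_eq_one e hQ hξ)]
  simp [e, EuclideanSpace.inner_toLp_toLp, dotProduct, mul_comm]

/-- **`Pin⁺_n` double covers `O(n)`.**
For `n ≥ 1` there is a surjective group homomorphism `ρ : Pin_{n,0} → O(n)` (the group of
linear isometric automorphisms of Euclidean `ℝⁿ`) sending each generator `ι ξ` with
`Q_{n,0} ξ = 1` to the reflection `η ↦ η - 2⟨ξ,η⟩ξ`, with kernel exactly `{1, -1}`. -/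
theorem pinPlus_double_covers_On (n : ℕ) (hn : 1 ≤ n) :
    ∃ ρ : pinGrp (Qsig n n) →* (EuclideanSpace ℝ (Fin n) ≃ₗᵢ[ℝ] EuclideanSpace ℝ (Fin n)),
      Function.Surjective ρ ∧
      (∀ (u : pinGrp (Qsig n n)) (ξ : Fin n → ℝ),
        ((u : (CliffordAlgebra (Qsig n n))ˣ) : CliffordAlgebra (Qsig n n)) = ι (Qsig n n) ξ →
        Qsig n n ξ = 1 →
        ∀ η : Fin n → ℝ,
          ρ u ((WithLp.equiv 2 (Fin n → ℝ)).symm η) =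
            (WithLp.equiv 2 (Fin n → ℝ)).symm (η - (2 * ∑ i, ξ i * η i) • ξ)) ∧
      (∀ u : pinGrp (Qsig n n),
        ρ u = 1 ↔
          (((u : (CliffordAlgebra (Qsig n n))ˣ) : CliffordAlgebra (Qsig n n)) = 1 ∨
           ((u : (CliffordAlgebra (Qsig n n))ˣ) : CliffordAlgebra (Qsig n n)) = -1)) :=
  pinPlus_double_covers_On_general n
end
end

section
/- Fix n ≥ 1. Let j : ℝⁿ → ℝⁿ⁺¹ be the inclusion x ↦ (x, 0) and let e = (0, …, 0, 1) ∈ ℝⁿ⁺¹, so that Q_{n,1}(j ξ) = Q_{n,0}(ξ) for all ξ ∈ ℝⁿ and Q_{n,1}(e) = −1. Then there is a unique group homomorphism φ : Pin_{n,0} → (Cl_{n,1})ˣ satisfying φ(ι(ξ)) = ι(j ξ) * ι(e) for every ξ ∈ ℝⁿ with Q_{n,0}(ξ) = 1; moreover φ is injective and its image is contained in the Spin group Spin_{n,1}. Thus Pin⁺_n embeds into Spin_{n,1}. -/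
noncomputable section
open CliffordAlgebra

/-- The inverse of a unit whose value lies in the even part of the Clifford algebra
also has value in the even part. -/
theorem unit_inv_mem_evenOdd_zero {V : Type*} [AddCommGroup V] [Module ℝ V]
    {Q : QuadraticForm ℝ V} {u : (CliffordAlgebra Q)ˣ}
    (hu : (↑u : CliffordAlgebra Q) ∈ evenOdd Q 0) :
    (↑u⁻¹ : CliffordAlgebra Q) ∈ evenOdd Q 0 := by
  classical
  set A := evenOdd Q with hA
  set x : CliffordAlgebra Q := (↑u⁻¹ : CliffordAlgebra Q) with hx
  -- decompose x into even and odd parts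
  have huniv : (Finset.univ : Finset (ZMod 2)) = {0, 1} := by decide
  have hsum : ∑ i : ZMod 2, DirectSum.of (fun i => A i) i (DirectSum.decompose A x i)
      = DirectSum.decompose A x := DirectSum.sum_univ_of _
  have hx01 : x = (DirectSum.decompose A x 0 : CliffordAlgebra Q)
      + (DirectSum.decompose A x 1 : CliffordAlgebra Q) := by
    have h := congrArg (DirectSum.decompose A).symm hsum
    rw [Equiv.symm_apply_apply, huniv, Finset.sum_insert (by decide),
      Finset.sum_singleton, DirectSum.decompose_symm_add, DirectSum.decompose_symm_of,
      DirectSum.decompose_symm_of] at h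
    exact h.symm
  have h1 : (1 : CliffordAlgebra Q)
      = ↑u * (DirectSum.decompose A x 0 : CliffordAlgebra Q)
        + ↑u * (DirectSum.decompose A x 1 : CliffordAlgebra Q) := by
    rw [← mul_add, ← hx01, hx, Units.mul_inv]
  have hm0 : ↑u * (DirectSum.decompose A x 0 : CliffordAlgebra Q) ∈ A 0 := by
    simpa using SetLike.mul_mem_graded hu (DirectSum.decompose A x 0).2
  have hm1 : ↑u * (DirectSum.decompose A x 1 : CliffordAlgebra Q) ∈ A 1 := by
    simpa using SetLike.mul_mem_graded hu (DirectSum.decompose A x 1).2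
  have hodd : ↑u * (DirectSum.decompose A x 1 : CliffordAlgebra Q) = 0 := by
    have := congrArg (fun y => (DirectSum.decompose A y 1 : CliffordAlgebra Q)) h1
    simp only [DirectSum.decompose_add, DirectSum.add_apply, Submodule.coe_add] at this
    rw [DirectSum.decompose_of_mem_ne A (SetLike.one_mem_graded A) (by decide : (0 : ZMod 2) ≠ 1),
      DirectSum.decompose_of_mem_ne A hm0 (by decide : (0 : ZMod 2) ≠ 1),
      DirectSum.decompose_of_mem_same A hm1] at this
    simpa using this.symm
  have hd1 : (DirectSum.decompose A x 1 : CliffordAlgebra Q) = 0 := by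
    have := congrArg (fun y => (↑u⁻¹ : CliffordAlgebra Q) * y) hodd
    simpa [← mul_assoc] using this
  rw [hx01, hd1, add_zero]
  exact (DirectSum.decompose A x 0).2

/-- The Spin group of a real quadratic form: the subgroup of the Pin group consisting of
elements whose underlying Clifford algebra element is even. -/
def spinGrp {V : Type*} [AddCommGroup V] [Module ℝ V] (Q : QuadraticForm ℝ V) :
    Subgroup (CliffordAlgebra Q)ˣ where
  carrier := {u | u ∈ pinGrp Q ∧ (↑u : CliffordAlgebra Q) ∈ evenOdd Q 0}
  one_mem' := ⟨one_mem _, SetLike.one_mem_graded _⟩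
  mul_mem' := fun ha hb => ⟨mul_mem ha.1 hb.1, by
    simpa using SetLike.mul_mem_graded ha.2 hb.2⟩
  inv_mem' := fun ha => ⟨inv_mem ha.1, unit_inv_mem_evenOdd_zero ha.2⟩

/-- The inclusion `ℝⁿ → ℝⁿ⁺¹`, `x ↦ (x, 0)`. -/
def jmap (n : ℕ) (x : Fin n → ℝ) : Fin (n + 1) → ℝ := Fin.snoc x 0

/-- The last standard basis vector `e = (0, …, 0, 1) ∈ ℝⁿ⁺¹`. -/
def elast (n : ℕ) : Fin (n + 1) → ℝ := Pi.single (Fin.last n) 1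

/-!
The Clifford algebra of `Q` is isomorphic to the even subalgebra of the Clifford algebra of
`Q ⊕ ⟨-1⟩` via `ι m ↦ ι (m, 0) * ι (0, 1)` (Mathlib's `equivEven`, up to the grade involution).
For `Q = Q_{n,0}` the form `Q ⊕ ⟨-1⟩` is `Q_{n,1}`, and this embedding is an injective algebra
map into the even part sending `ι ξ` to `ι (j ξ) * ι e`. It maps every unit `ι ξ` with `Q ξ = ±1` to
a product of two such units of `Cl_{n,1}`, hence restricts to an injective homomorphism from `Pin`
into `Spin_{n,1}`. Since `Q_{n,0}` is positive definite, `Pin_{n,0}` is generated by the `ι ξ` with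
`Q ξ = 1`, which gives uniqueness.
-/

open CliffordAlgebra.EquivEven

def Fin.snocLinearEquiv (R : Type*) [Semiring R] (n : ℕ) :
    ((Fin n → R) × R) ≃ₗ[R] (Fin (n + 1) → R) where
  toFun x := Fin.snoc x.1 x.2
  invFun y := (Fin.init y, y (Fin.last n))
  map_add' x y := by
    funext i
    refine Fin.lastCases ?_ (fun j => ?_) i <;> simp
  map_smul' c x := by
    funext i
    refine Fin.lastCases ?_ (fun j => ?_) i <;> simp
  left_inv x := by simp
  right_inv y := by simp

section Signature

variable {n p : ℕ}

theorem Qsig_snoc (hp : p ≤ n) (x : Fin n → ℝ) (r : ℝ) :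
    Qsig (n + 1) p (Fin.snoc x r) = Qsig n p x - r * r := by
  simp only [Qsig, QuadraticMap.weightedSumSquares_apply, Fin.sum_univ_castSucc,
    Fin.snoc_castSucc, Fin.snoc_last, Fin.val_castSucc, Fin.val_last, if_neg hp.not_gt,
    smul_eq_mul]
  ring

theorem Qsig_self_nonneg (ξ : Fin n → ℝ) : 0 ≤ Qsig n n ξ := by
  simp only [Qsig, QuadraticMap.weightedSumSquares_apply]
  refine Finset.sum_nonneg fun i _ => ?_
  rw [if_pos i.isLt, one_smul]
  exact mul_self_nonneg _

theorem elast_eq_snoc : elast n = Fin.snoc (0 : Fin n → ℝ) 1 := by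
  funext i
  refine Fin.lastCases ?_ (fun j => ?_) i <;> simp [elast]

theorem Qsig_jmap (hp : p ≤ n) (ξ : Fin n → ℝ) : Qsig (n + 1) p (jmap n ξ) = Qsig n p ξ := by
  rw [jmap, Qsig_snoc hp, mul_zero, sub_zero]

theorem Qsig_elast (hp : p ≤ n) : Qsig (n + 1) p (elast n) = -1 := by
  rw [elast_eq_snoc, Qsig_snoc hp, map_zero, mul_one, zero_sub]

def snocIsometryEquiv (hp : p ≤ n) : (Q' (Qsig n p)).IsometryEquiv (Qsig (n + 1) p) where
  toLinearEquiv := Fin.snocLinearEquiv ℝ n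
  map_app' x := (Qsig_snoc hp x.1 x.2).trans (Q'_apply _ x).symm

end Signature

namespace CliffordAlgebra

section EvenEmbedding

variable {R M N : Type*} [CommRing R] [AddCommGroup M] [Module R M] [AddCommGroup N]
  [Module R N] {Q : QuadraticForm R M} {Q₂ : QuadraticForm R N}

def evenEmbedding (f : (Q' Q).IsometryEquiv Q₂) : CliffordAlgebra Q →ₐ[R] CliffordAlgebra Q₂ :=
  (equivOfIsometry f).toAlgHom.comp ((even (Q' Q)).val.comp ((toEven Q).comp involute))

variable (f : (Q' Q).IsometryEquiv Q₂)

theorem evenEmbedding_ι (m : M) :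
    evenEmbedding f (ι Q m) = ι Q₂ (f (m, 0)) * ι Q₂ (f (0, 1)) := by
  change equivOfIsometry f (toEven Q (involute (ι Q m)) : CliffordAlgebra (Q' Q)) = _
  rw [involute_ι, map_neg, NegMemClass.coe_neg, toEven_ι, neg_e0_mul_v, map_mul]
  exact congr_arg₂ (· * ·) (map_apply_ι _ _) (map_apply_ι _ _)

theorem evenEmbedding_injective : Function.Injective (evenEmbedding f) :=
  (equivOfIsometry f).injective.comp <| Subtype.val_injective.comp <|
    (equivEven Q).injective.comp (Function.LeftInverse.injective involute_involute)

theorem evenEmbedding_mem_evenOdd_zero (x : CliffordAlgebra Q) :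
    evenEmbedding f x ∈ evenOdd Q₂ 0 := by
  induction x using CliffordAlgebra.induction with
  | algebraMap r => rw [AlgHom.commutes]; exact SetLike.algebraMap_mem_graded _ _
  | ι m => rw [evenEmbedding_ι]; exact ι_mul_ι_mem_evenOdd_zero _ _ _
  | mul a b ha hb => rw [map_mul]; simpa using SetLike.mul_mem_graded ha hb
  | add a b ha hb => rw [map_add]; exact add_mem ha hb

end EvenEmbedding

end CliffordAlgebra

section PinGroup

variable {V W : Type*} [AddCommGroup V] [Module ℝ V] [AddCommGroup W] [Module ℝ W]
  {Q : QuadraticForm ℝ V} {Q₂ : QuadraticForm ℝ W}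

theorem exists_mem_pinGrp_val_eq_ι {ξ : V} (hξ : Q ξ = 1 ∨ Q ξ = -1) :
    ∃ u ∈ pinGrp Q, (u : CliffordAlgebra Q) = ι Q ξ := by
  have hunit : IsUnit (Q ξ) := by rcases hξ with h | h <;> simp [h]
  obtain ⟨u, hu⟩ := isUnit_ι_of_isUnit Q hunit
  exact ⟨u, Subgroup.subset_closure ⟨ξ, hu, hξ⟩, hu⟩

theorem pinGrp_hom_ext {G : Type*} [Monoid G] {φ ψ : pinGrp Q →* G}
    (h : ∀ (u : pinGrp Q) (ξ : V), ((u : (CliffordAlgebra Q)ˣ) : CliffordAlgebra Q) = ι Q ξ →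
      (Q ξ = 1 ∨ Q ξ = -1) → φ u = ψ u) :
    φ = ψ :=
  MonoidHom.eq_of_eqOn_dense Subgroup.closure_closure_coe_preimage
    fun u ⟨ξ, hu, hξ⟩ => h u ξ hu hξ

def pinMap (F : CliffordAlgebra Q →ₐ[ℝ] CliffordAlgebra Q₂) :
    pinGrp Q →* (CliffordAlgebra Q₂)ˣ :=
  (Units.map (F : CliffordAlgebra Q →* CliffordAlgebra Q₂)).comp (pinGrp Q).subtype

theorem val_pinMap (F : CliffordAlgebra Q →ₐ[ℝ] CliffordAlgebra Q₂) (u : pinGrp Q) :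
    (pinMap F u : CliffordAlgebra Q₂) = F ((u : (CliffordAlgebra Q)ˣ) : CliffordAlgebra Q) :=
  rfl

theorem pinMap_injective {F : CliffordAlgebra Q →ₐ[ℝ] CliffordAlgebra Q₂}
    (hF : Function.Injective F) : Function.Injective (pinMap F) :=
  (Units.map_injective (f := (F : CliffordAlgebra Q →* CliffordAlgebra Q₂)) hF).comp
    Subtype.val_injective

theorem pinMap_mem_pinGrp {F : CliffordAlgebra Q →ₐ[ℝ] CliffordAlgebra Q₂}
    (hF : ∀ ξ, (Q ξ = 1 ∨ Q ξ = -1) → ∃ w ∈ pinGrp Q₂, (w : CliffordAlgebra Q₂) = F (ι Q ξ))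
    (u : pinGrp Q) : pinMap F u ∈ pinGrp Q₂ := by
  suffices pinGrp Q ≤ (pinGrp Q₂).comap (Units.map (F : CliffordAlgebra Q →* CliffordAlgebra Q₂))
    from this u.2
  refine (Subgroup.closure_le _).mpr ?_
  rintro y ⟨ξ, hy, hξ⟩
  obtain ⟨w, hw, hw_val⟩ := hF ξ hξ
  have hyw : Units.map (F : CliffordAlgebra Q →* CliffordAlgebra Q₂) y = w :=
    Units.ext (by simp [hy, hw_val])
  exact Subgroup.mem_comap.mpr (hyw ▸ hw)

theorem eq_pinMap_of_forall_ι {F : CliffordAlgebra Q →ₐ[ℝ] CliffordAlgebra Q₂}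
    (hQ : ∀ ξ, Q ξ ≠ -1) {ψ : pinGrp Q →* (CliffordAlgebra Q₂)ˣ}
    (hψ : ∀ (u : pinGrp Q) (ξ : V), ((u : (CliffordAlgebra Q)ˣ) : CliffordAlgebra Q) = ι Q ξ →
      Q ξ = 1 → (ψ u : CliffordAlgebra Q₂) = F (ι Q ξ)) :
    ψ = pinMap F :=
  pinGrp_hom_ext fun u ξ hu hξ =>
    Units.ext <| by rw [hψ u ξ hu (hξ.resolve_right (hQ ξ)), val_pinMap, hu]

theorem pinMap_evenEmbedding_mem_spinGrp (f : (Q' Q).IsometryEquiv Q₂)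
    (u : pinGrp Q) : pinMap (evenEmbedding f) u ∈ spinGrp Q₂ := by
  refine ⟨pinMap_mem_pinGrp (fun ξ hξ => ?_) u, evenEmbedding_mem_evenOdd_zero f _⟩
  obtain ⟨w₁, hw₁, hw₁_val⟩ := exists_mem_pinGrp_val_eq_ι (Q := Q₂) (ξ := f (ξ, 0))
    (by simpa [Q'_apply] using hξ)
  obtain ⟨w₂, hw₂, hw₂_val⟩ := exists_mem_pinGrp_val_eq_ι (Q := Q₂) (ξ := f (0, 1))
    (Or.inr (by simp))
  exact ⟨w₁ * w₂, mul_mem hw₁ hw₂, by rw [Units.val_mul, hw₁_val, hw₂_val, evenEmbedding_ι]⟩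

end PinGroup

theorem pinPlus_embeds_in_spin_n1_general (n : ℕ) :
    (∀ ξ : Fin n → ℝ, Qsig (n + 1) n (jmap n ξ) = Qsig n n ξ) ∧
    Qsig (n + 1) n (elast n) = -1 ∧
    (∃! φ : pinGrp (Qsig n n) →* (CliffordAlgebra (Qsig (n + 1) n))ˣ,
      ∀ (u : pinGrp (Qsig n n)) (ξ : Fin n → ℝ),
        ((u : (CliffordAlgebra (Qsig n n))ˣ) : CliffordAlgebra (Qsig n n)) = ι (Qsig n n) ξ →
        Qsig n n ξ = 1 →
        ((φ u : (CliffordAlgebra (Qsig (n + 1) n))ˣ) : CliffordAlgebra (Qsig (n + 1) n)) =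
          ι (Qsig (n + 1) n) (jmap n ξ) * ι (Qsig (n + 1) n) (elast n)) ∧
    (∀ φ : pinGrp (Qsig n n) →* (CliffordAlgebra (Qsig (n + 1) n))ˣ,
      (∀ (u : pinGrp (Qsig n n)) (ξ : Fin n → ℝ),
        ((u : (CliffordAlgebra (Qsig n n))ˣ) : CliffordAlgebra (Qsig n n)) = ι (Qsig n n) ξ →
        Qsig n n ξ = 1 →
        ((φ u : (CliffordAlgebra (Qsig (n + 1) n))ˣ) : CliffordAlgebra (Qsig (n + 1) n)) =
          ι (Qsig (n + 1) n) (jmap n ξ) * ι (Qsig (n + 1) n) (elast n)) →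
      Function.Injective φ ∧ ∀ u, φ u ∈ spinGrp (Qsig (n + 1) n)) := by
  set f := snocIsometryEquiv (le_refl n)
  have hF : ∀ ξ, evenEmbedding f (ι (Qsig n n) ξ) =
      ι (Qsig (n + 1) n) (jmap n ξ) * ι (Qsig (n + 1) n) (elast n) := fun ξ => by
    rw [evenEmbedding_ι, elast_eq_snoc]
    rfl
  have hQ : ∀ ξ, Qsig n n ξ ≠ -1 := fun ξ h => by linarith [Qsig_self_nonneg ξ]
  refine ⟨Qsig_jmap le_rfl, Qsig_elast le_rfl, ⟨pinMap (evenEmbedding f), ?_, ?_⟩, ?_⟩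
  · intro u ξ hu _
    rw [val_pinMap, hu, hF]
  · exact fun ψ hψ => eq_pinMap_of_forall_ι hQ fun u ξ hu h => (hψ u ξ hu h).trans (hF ξ).symm
  · intro ψ hψ
    obtain rfl := eq_pinMap_of_forall_ι hQ fun u ξ hu h => (hψ u ξ hu h).trans (hF ξ).symm
    exact ⟨pinMap_injective (evenEmbedding_injective f), pinMap_evenEmbedding_mem_spinGrp f⟩

/-- **`Pin⁺_n` embeds into `Spin_{n,1}`.**
With `j : ℝⁿ → ℝⁿ⁺¹`, `x ↦ (x,0)` and `e = (0,…,0,1)`, one has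
`Q_{n,1}(j ξ) = Q_{n,0}(ξ)` and `Q_{n,1}(e) = -1`; there is a unique group homomorphism
`φ : Pin_{n,0} → (Cl_{n,1})ˣ` with `φ (ι ξ) = ι (j ξ) * ι e` for all `ξ` with
`Q_{n,0} ξ = 1`, and any such `φ` is injective with image contained in `Spin_{n,1}`. -/
theorem pinPlus_embeds_in_spin_n1 (n : ℕ) (hn : 1 ≤ n) :
    (∀ ξ : Fin n → ℝ, Qsig (n + 1) n (jmap n ξ) = Qsig n n ξ) ∧
    Qsig (n + 1) n (elast n) = -1 ∧
    (∃! φ : pinGrp (Qsig n n) →* (CliffordAlgebra (Qsig (n + 1) n))ˣ,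
      ∀ (u : pinGrp (Qsig n n)) (ξ : Fin n → ℝ),
        ((u : (CliffordAlgebra (Qsig n n))ˣ) : CliffordAlgebra (Qsig n n)) = ι (Qsig n n) ξ →
        Qsig n n ξ = 1 →
        ((φ u : (CliffordAlgebra (Qsig (n + 1) n))ˣ) : CliffordAlgebra (Qsig (n + 1) n)) =
          ι (Qsig (n + 1) n) (jmap n ξ) * ι (Qsig (n + 1) n) (elast n)) ∧
    (∀ φ : pinGrp (Qsig n n) →* (CliffordAlgebra (Qsig (n + 1) n))ˣ,
      (∀ (u : pinGrp (Qsig n n)) (ξ : Fin n → ℝ),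
        ((u : (CliffordAlgebra (Qsig n n))ˣ) : CliffordAlgebra (Qsig n n)) = ι (Qsig n n) ξ →
        Qsig n n ξ = 1 →
        ((φ u : (CliffordAlgebra (Qsig (n + 1) n))ˣ) : CliffordAlgebra (Qsig (n + 1) n)) =
          ι (Qsig (n + 1) n) (jmap n ξ) * ι (Qsig (n + 1) n) (elast n)) →
      Function.Injective φ ∧ ∀ u, φ u ∈ spinGrp (Qsig (n + 1) n)) :=
  pinPlus_embeds_in_spin_n1_general n
end
end

section
/- The Spin group Spin_2 = Spin_{0,2}, the subgroup of even elements of the Pin group of the negative definite quadratic form Q_{0,2}(x) = −x₁² − x₂² on ℝ², is isomorphic as a group to the circle group 𝕋 (the multiplicative group of complex numbers of absolute value 1). -/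
noncomputable section
open CliffordAlgebra

/-! In `Cl_{0,2}` the basis vectors satisfy `e₀² = e₁² = -1` and `e₁ e₀ = -e₀ e₁`, so
`ω = e₀ e₁` squares to `-1` and `a + b i ↦ a + b ω` embeds `ℂ` into the even part; let
`φ : 𝕋 → Cl_{0,2}ˣ` be its restriction to the circle. Since `(a + b ω) e₀ = ι (a, b)`,
the generators of the Pin group (all with `Q ξ = -1`, the form being negative definite)
are exactly the elements `φ(z) e₀` with `z ∈ 𝕋`. As `e₀` normalises `φ(𝕋)` and
`e₀² = φ(-1)`, the Pin group is `φ(𝕋) ∪ φ(𝕋) e₀`, and the second coset is odd;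
hence `Spin_2 = φ(𝕋) ≅ 𝕋`. -/

namespace Subgroup

variable {G : Type*} [Group G]

def unionRightCoset (N : Subgroup G) {g : G} (hg : g ∈ normalizer (N : Set G))
    (hsq : g * g ∈ N) : Subgroup G where
  carrier := {u | u ∈ N ∨ u * g⁻¹ ∈ N}
  one_mem' := Or.inl N.one_mem
  mul_mem' := by
    have conj (n : G) (hn : n ∈ N) : g * n * g⁻¹ ∈ N := (mem_normalizer_iff.mp hg n).mp hn
    rintro x y (hx | hx) (hy | hy)
    · exact Or.inl (mul_mem hx hy)
    · exact Or.inr (by simpa only [mul_assoc] using mul_mem hx hy)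
    · refine Or.inr ?_
      have h : x * y * g⁻¹ = x * g⁻¹ * (g * y * g⁻¹) := by group
      exact h ▸ mul_mem hx (conj y hy)
    · refine Or.inl ?_
      have h : x * y = x * g⁻¹ * (g * (y * g⁻¹) * g⁻¹) * (g * g) := by group
      exact h ▸ mul_mem (mul_mem hx (conj _ hy)) hsq
  inv_mem' := by
    rintro x (hx | hx)
    · exact Or.inl (inv_mem hx)
    · refine Or.inr ?_
      have h : x⁻¹ * g⁻¹ = g⁻¹ * (x * g⁻¹)⁻¹ * g * (g * g)⁻¹ := by group
      exact h ▸ mul_mem ((mem_normalizer_iff''.mp hg _).mp (inv_mem hx)) (inv_mem hsq)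

end Subgroup

namespace SpinTwo

open ComplexConjugate

local notation "Q₂" => Qsig 2 0

theorem Qsig_two_zero_apply (x : Fin 2 → ℝ) : Q₂ x = -(x 0 * x 0 + x 1 * x 1) := by
  simp [Qsig, QuadraticMap.weightedSumSquares_apply, Fin.sum_univ_two]

def e₀ : CliffordAlgebra Q₂ := ι Q₂ (Pi.single 0 1)

def e₁ : CliffordAlgebra Q₂ := ι Q₂ (Pi.single 1 1)

theorem ι_eq (x : Fin 2 → ℝ) : ι Q₂ x = x 0 • e₀ + x 1 • e₁ := by
  rw [e₀, e₁, ← map_smul, ← map_smul, ← map_add]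
  congr 1
  ext i
  fin_cases i <;> simp

theorem e₀_mul_e₀ : e₀ * e₀ = -1 := by
  rw [e₀, ι_sq_scalar, Qsig_two_zero_apply]
  simp

theorem e₁_mul_e₁ : e₁ * e₁ = -1 := by
  rw [e₁, ι_sq_scalar, Qsig_two_zero_apply]
  simp

theorem e₁_mul_e₀ : e₁ * e₀ = -(e₀ * e₁) := by
  have h := ι_mul_ι_add_swap (Q := Q₂) (Pi.single 0 1) (Pi.single 1 1)
  simp only [QuadraticMap.polar, Qsig_two_zero_apply] at h
  norm_num at h
  rw [← e₀, ← e₁] at h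
  exact eq_neg_of_add_eq_zero_right h

theorem e₀_mul_e₁_mul_e₀ : e₀ * e₁ * e₀ = e₁ := by
  rw [mul_assoc, e₁_mul_e₀, mul_neg, ← mul_assoc, e₀_mul_e₀, neg_one_mul, neg_neg]

theorem e₀_mul_e₁_sq : e₀ * e₁ * (e₀ * e₁) = -1 := by
  rw [← mul_assoc, e₀_mul_e₁_mul_e₀, e₁_mul_e₁]

def ofComplex : ℂ →ₐ[ℝ] CliffordAlgebra Q₂ := Complex.liftAux (e₀ * e₁) e₀_mul_e₁_sq

theorem ofComplex_apply (z : ℂ) : ofComplex z = algebraMap ℝ _ z.re + z.im • (e₀ * e₁) :=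
  Complex.liftAux_apply _ _ z

theorem ofComplex_mem_evenOdd_zero (z : ℂ) : ofComplex z ∈ evenOdd Q₂ 0 := by
  rw [ofComplex_apply]
  exact add_mem (SetLike.algebraMap_mem_graded _ _)
    (Submodule.smul_mem _ _ (ι_mul_ι_mem_evenOdd_zero _ _ _))

theorem ofComplex_mul_e₀ (z : ℂ) : ofComplex z * e₀ = ι Q₂ ![z.re, z.im] := by
  rw [ofComplex_apply, ι_eq, Algebra.algebraMap_eq_smul_one]
  simp [add_mul, e₀_mul_e₁_mul_e₀]

theorem e₀_mul_ofComplex (z : ℂ) : e₀ * ofComplex z = ofComplex (conj z) * e₀ := by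
  rw [ofComplex_apply, ofComplex_apply, Algebra.algebraMap_eq_smul_one,
    Algebra.algebraMap_eq_smul_one]
  simp only [mul_add, add_mul, mul_smul_comm, smul_mul_assoc, mul_one, one_mul,
    Complex.conj_re, Complex.conj_im, ← mul_assoc, e₀_mul_e₀, e₀_mul_e₁_mul_e₀,
    smul_neg, neg_smul, neg_mul]

def e₀Unit : (CliffordAlgebra Q₂)ˣ :=
  ⟨e₀, -e₀, by rw [mul_neg, e₀_mul_e₀, neg_neg], by rw [neg_mul, e₀_mul_e₀, neg_neg]⟩

theorem val_e₀Unit : (e₀Unit : CliffordAlgebra Q₂) = e₀ := rfl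

def circleHom : Circle →* (CliffordAlgebra Q₂)ˣ :=
  (Units.map ofComplex.toMonoidHom).comp Circle.toUnits

theorem val_circleHom (z : Circle) : (circleHom z : CliffordAlgebra Q₂) = ofComplex z := rfl

theorem circleHom_injective : Function.Injective circleHom := fun _ _ h ↦
  Circle.ext <| ofComplex.toRingHom.injective <| congrArg Units.val h

theorem e₀Unit_mul_circleHom (z : Circle) :
    e₀Unit * circleHom z = circleHom z⁻¹ * e₀Unit := by
  ext
  rw [Units.val_mul, Units.val_mul, val_circleHom, val_circleHom, val_e₀Unit,
    Circle.coe_inv_eq_conj]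
  exact e₀_mul_ofComplex z

theorem e₀Unit_mem_normalizer : e₀Unit ∈ Subgroup.normalizer (circleHom.range : Set _) := by
  refine Subgroup.mem_normalizer_iff.mpr fun u ↦ ⟨?_, ?_⟩
  · rintro ⟨z, rfl⟩
    exact ⟨z⁻¹, by rw [e₀Unit_mul_circleHom, mul_inv_cancel_right]⟩
  · rintro ⟨z, hz⟩
    refine ⟨z⁻¹, ?_⟩
    calc circleHom z⁻¹ = e₀Unit⁻¹ * (e₀Unit * circleHom z⁻¹) := (inv_mul_cancel_left _ _).symm
      _ = e₀Unit⁻¹ * circleHom z * e₀Unit := by rw [e₀Unit_mul_circleHom, inv_inv, mul_assoc]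
      _ = u := by rw [hz]; group

theorem e₀Unit_mul_self : e₀Unit * e₀Unit = circleHom (-1) := by
  ext
  rw [Units.val_mul, val_circleHom, Circle.coe_neg, Circle.coe_one, map_neg, map_one]
  exact e₀_mul_e₀

theorem val_circleHom_mul_e₀Unit (z : Circle) :
    (↑(circleHom z * e₀Unit) : CliffordAlgebra Q₂) = ι Q₂ ![(z : ℂ).re, (z : ℂ).im] :=
  ofComplex_mul_e₀ z

theorem pinGrp_le_unionRightCoset :
    pinGrp Q₂ ≤ circleHom.range.unionRightCoset e₀Unit_mem_normalizer
      ⟨-1, e₀Unit_mul_self.symm⟩ := by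
  refine Subgroup.closure_le _ |>.mpr ?_
  rintro x ⟨ξ, hx, hQ | hQ⟩
  · rw [Qsig_two_zero_apply] at hQ
    nlinarith [mul_self_nonneg (ξ 0), mul_self_nonneg (ξ 1)]
  · rw [Qsig_two_zero_apply] at hQ
    have hnorm : ‖(⟨ξ 0, ξ 1⟩ : ℂ)‖ = 1 := by
      rw [Complex.norm_def, Complex.normSq_mk, Real.sqrt_eq_one]
      linarith
    obtain ⟨w, hw⟩ : ∃ w : Circle, (w : ℂ) = ⟨ξ 0, ξ 1⟩ :=
      ⟨⟨_, mem_sphere_zero_iff_norm.2 hnorm⟩, rfl⟩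
    refine Or.inr ⟨w, ?_⟩
    rw [eq_mul_inv_iff_mul_eq]
    ext
    rw [val_circleHom_mul_e₀Unit, hx, hw]
    congr 1
    ext i
    fin_cases i <;> rfl

theorem circleHom_mem_pinGrp (z : Circle) : circleHom z ∈ pinGrp Q₂ := by
  have hz : Q₂ ![(z : ℂ).re, (z : ℂ).im] = -1 := by
    have hnormSq := Circle.normSq_coe z
    rw [Complex.normSq_apply] at hnormSq
    simp [Qsig_two_zero_apply, hnormSq]
  have he₀ : Q₂ (Pi.single 0 1) = -1 := by
    simp [Qsig_two_zero_apply]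
  rw [← mul_inv_cancel_right (circleHom z) e₀Unit]
  exact mul_mem (Subgroup.subset_closure ⟨_, val_circleHom_mul_e₀Unit z, Or.inr hz⟩)
    (inv_mem (Subgroup.subset_closure ⟨_, rfl, Or.inr he₀⟩))

theorem range_circleHom : circleHom.range = spinGrp Q₂ := by
  refine le_antisymm ?_ ?_
  · rintro _ ⟨z, rfl⟩
    exact ⟨circleHom_mem_pinGrp z, ofComplex_mem_evenOdd_zero z⟩
  · rintro u ⟨hpin, heven⟩
    refine (pinGrp_le_unionRightCoset hpin).resolve_right ?_
    rintro ⟨z, hz⟩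
    rw [eq_mul_inv_iff_mul_eq] at hz
    have hodd : (u : CliffordAlgebra Q₂) ∈ evenOdd Q₂ 1 :=
      hz ▸ val_circleHom_mul_e₀Unit z ▸ ι_mem_evenOdd_one _ _
    exact u.ne_zero (Submodule.disjoint_def.mp (evenOdd_isCompl Q₂).disjoint _ heven hodd)

end SpinTwo

/-- **`Spin_2 ≅ 𝕋`.**
The Spin group `Spin_2 = Spin_{0,2}` (even elements of the Pin group of the negative
definite form `Q_{0,2}` on `ℝ²`) is isomorphic to the circle group of unit complex
numbers. -/
theorem spin_two_iso_circle :
    Nonempty (spinGrp (Qsig 2 0) ≃* Circle) :=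
  ⟨((MonoidHom.ofInjective SpinTwo.circleHom_injective).trans
    (MulEquiv.subgroupCongr SpinTwo.range_circleHom)).symm⟩
end
end

section
/- The Pin group Pin⁺_2 = Pin_{2,0} of the positive definite quadratic form Q_{2,0}(x) = x₁² + x₂² on ℝ² is isomorphic as a group to the semidirect product 𝕋 ⋊ ℤ/2ℤ, where 𝕋 is the circle group of complex numbers of absolute value 1 and the nontrivial element of ℤ/2ℤ acts on 𝕋 by the inversion automorphism z ↦ z⁻¹. -/
/-!
For an orthonormal pair `e₁, e₂`, the bivector `ω = e₁ e₂` squares to `-1`, so `a + b i ↦ a + b ω`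
embeds `ℂ` in the Clifford algebra, and conjugation by `e₁` restricts to complex conjugation there.
Hence `(z, g) ↦ z e₁ᵍ` is a homomorphism `𝕋 ⋊ ℤ/2 → Cl(Q)ˣ`. Its image is `Pin(Q)`: a unit circle
element is `ι(v) e₁` for a unit vector `v`, and conversely every unit vector `x e₁ + y e₂` is
`(x - y i) e₁` (no vector has `Q v = -1`). It is injective because `ℂ` is a field and the grade
involution fixes the image of `ℂ` but negates `e₁`.
-/

noncomputable section
open CliffordAlgebra

/-- The action of `ℤ/2ℤ` on the circle group `𝕋` in which the nontrivial element acts by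
the inversion automorphism `z ↦ z⁻¹`. -/
noncomputable def circleInvAction : Multiplicative (ZMod 2) →* MulAut Circle where
  toFun z := if Multiplicative.toAdd z = 0 then 1 else MulEquiv.inv Circle
  map_one' := by simp
  map_mul' := by
    have h2 : MulEquiv.inv Circle * MulEquiv.inv Circle = (1 : MulAut Circle) := by
      ext x
      simp [MulAut.mul_apply]
    have hcases : ∀ x : ZMod 2, x = 0 ∨ x = 1 := by decide
    intro a b
    rcases hcases (Multiplicative.toAdd a) with ha | ha <;>
      rcases hcases (Multiplicative.toAdd b) with hb | hb <;>
        simp [toAdd_mul, ha, hb, h2, show (2 : ZMod 2) = 0 by decide,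
          show (1 + 1 : ZMod 2) = 0 by decide]

namespace CliffordAlgebra

variable {V : Type*} [AddCommGroup V] [Module ℝ V] {Q : QuadraticForm ℝ V}

def ιUnit {v : V} (hv : Q v = 1) : (CliffordAlgebra Q)ˣ where
  val := ι Q v
  inv := ι Q v
  val_inv := by rw [ι_sq_scalar, hv, map_one]
  inv_val := by rw [ι_sq_scalar, hv, map_one]

@[simp]
theorem val_ιUnit {v : V} (hv : Q v = 1) : (ιUnit hv : CliffordAlgebra Q) = ι Q v := rfl

theorem ιUnit_mem_pinGrp {v : V} (hv : Q v = 1) : ιUnit hv ∈ pinGrp Q :=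
  Subgroup.subset_closure ⟨v, rfl, Or.inl hv⟩

end CliffordAlgebra

namespace Multiplicative

theorem zmodTwo_cases (g : Multiplicative (ZMod 2)) : g = 1 ∨ g = ofAdd 1 := by
  revert g; decide

variable {G : Type*} [Group G]

def zmodTwoHom (g : G) (hg : g * g = 1) : Multiplicative (ZMod 2) →* G where
  toFun z := if toAdd z = 0 then 1 else g
  map_one' := if_pos rfl
  map_mul' a c := by
    rcases zmodTwo_cases a with rfl | rfl <;> rcases zmodTwo_cases c with rfl | rfl <;>
      simp [← ofAdd_add, hg, show (1 + 1 : ZMod 2) = 0 by decide]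

@[simp]
theorem zmodTwoHom_ofAdd_one (g : G) (hg : g * g = 1) : zmodTwoHom g hg (ofAdd 1) = g := by
  simp [zmodTwoHom]

end Multiplicative

@[simp]
theorem circleInvAction_ofAdd_one : circleInvAction (.ofAdd 1) = MulEquiv.inv Circle := by
  simp [circleInvAction]

structure OrthonormalPair {V : Type*} [AddCommGroup V] [Module ℝ V] (Q : QuadraticForm ℝ V) where
  e₁ : V
  e₂ : V
  apply_e₁ : Q e₁ = 1
  apply_e₂ : Q e₂ = 1
  isOrtho : Q.IsOrtho e₁ e₂

namespace OrthonormalPair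

variable {V : Type*} [AddCommGroup V] [Module ℝ V] {Q : QuadraticForm ℝ V}
  (b : OrthonormalPair Q)

theorem apply_smul_add_smul (x y : ℝ) : Q (x • b.e₁ + y • b.e₂) = x ^ 2 + y ^ 2 := by
  have hpolar : QuadraticMap.polar Q (x • b.e₁) (y • b.e₂) = 0 := by
    rw [QuadraticMap.polar_smul_left, QuadraticMap.polar_smul_right, b.isOrtho.polar_eq_zero,
      smul_zero, smul_zero]
  rw [QuadraticMap.polar, QuadraticMap.map_smul, QuadraticMap.map_smul, b.apply_e₁, b.apply_e₂,
    smul_eq_mul, smul_eq_mul] at hpolar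
  linear_combination hpolar

theorem ι_e₁_mul_self : ι Q b.e₁ * ι Q b.e₁ = 1 := by rw [ι_sq_scalar, b.apply_e₁, map_one]

theorem ι_e₂_mul_self : ι Q b.e₂ * ι Q b.e₂ = 1 := by rw [ι_sq_scalar, b.apply_e₂, map_one]

def bivector : CliffordAlgebra Q := ι Q b.e₁ * ι Q b.e₂

theorem ι_e₂_mul_ι_e₁ : ι Q b.e₂ * ι Q b.e₁ = -b.bivector :=
  ι_mul_ι_comm_of_isOrtho b.isOrtho.symm

theorem ι_e₁_mul_bivector : ι Q b.e₁ * b.bivector = ι Q b.e₂ := by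
  rw [bivector, ← mul_assoc, b.ι_e₁_mul_self, one_mul]

theorem bivector_mul_ι_e₁ : b.bivector * ι Q b.e₁ = -ι Q b.e₂ := by
  rw [bivector, mul_assoc, b.ι_e₂_mul_ι_e₁, mul_neg, b.ι_e₁_mul_bivector]

theorem bivector_mul_self : b.bivector * b.bivector = -1 :=
  calc b.bivector * b.bivector = b.bivector * ι Q b.e₁ * ι Q b.e₂ := (mul_assoc _ _ _).symm
  _ = -1 := by rw [b.bivector_mul_ι_e₁, neg_mul, b.ι_e₂_mul_self]

def toComplex : ℂ →ₐ[ℝ] CliffordAlgebra Q := Complex.liftAux b.bivector b.bivector_mul_self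

theorem toComplex_apply (z : ℂ) :
    b.toComplex z = algebraMap ℝ _ z.re + z.im • b.bivector :=
  Complex.liftAux_apply _ _ z

theorem toComplex_injective : Function.Injective b.toComplex :=
  (b.toComplex : ℂ →+* CliffordAlgebra Q).injective

theorem involute_toComplex (z : ℂ) : involute (b.toComplex z) = b.toComplex z := by
  have h : (involute : CliffordAlgebra Q →ₐ[ℝ] _).comp b.toComplex = b.toComplex :=
    Complex.algHom_ext <| by
      simp [toComplex, bivector, involute_ι]
  exact congrArg (· z) h

theorem toComplex_conj_mul_ι_e₁ (z : ℂ) :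
    b.toComplex ((starRingEnd ℂ) z) * ι Q b.e₁ = ι Q (z.re • b.e₁ + z.im • b.e₂) := by
  rw [toComplex_apply, add_mul, smul_mul_assoc, b.bivector_mul_ι_e₁,
    Algebra.algebraMap_eq_smul_one, smul_mul_assoc, one_mul, map_add, map_smul, map_smul,
    Complex.conj_re, Complex.conj_im, neg_smul, smul_neg, neg_neg]

theorem ι_e₁_mul_toComplex_mul_ι_e₁ (z : ℂ) :
    ι Q b.e₁ * b.toComplex z * ι Q b.e₁ = b.toComplex ((starRingEnd ℂ) z) := by
  rw [toComplex_apply, toComplex_apply, Algebra.algebraMap_eq_smul_one,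
    Algebra.algebraMap_eq_smul_one, mul_add, add_mul, mul_smul_comm, mul_smul_comm, mul_one,
    smul_mul_assoc, smul_mul_assoc, b.ι_e₁_mul_self, b.ι_e₁_mul_bivector, b.ι_e₂_mul_ι_e₁,
    Complex.conj_re, Complex.conj_im, neg_smul, smul_neg]

def circleHom : Circle →* (CliffordAlgebra Q)ˣ :=
  (Units.map (b.toComplex : ℂ →* CliffordAlgebra Q)).comp Circle.toUnits

@[simp]
theorem val_circleHom (z : Circle) : (b.circleHom z : CliffordAlgebra Q) = b.toComplex z := rfl

def reflectionHom : Multiplicative (ZMod 2) →* (CliffordAlgebra Q)ˣ :=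
  Multiplicative.zmodTwoHom (ιUnit b.apply_e₁) (Units.ext b.ι_e₁_mul_self)

theorem circleHom_circleInvAction (g : Multiplicative (ZMod 2)) (z : Circle) :
    b.circleHom (circleInvAction g z) = MulAut.conj (b.reflectionHom g) (b.circleHom z) := by
  rcases Multiplicative.zmodTwo_cases g with rfl | rfl
  · simp
  · ext
    rw [circleInvAction_ofAdd_one, MulEquiv.inv_apply, val_circleHom, Circle.coe_inv_eq_conj,
      ← b.ι_e₁_mul_toComplex_mul_ι_e₁]
    rfl

def pinHom : Circle ⋊[circleInvAction] Multiplicative (ZMod 2) →* (CliffordAlgebra Q)ˣ :=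
  SemidirectProduct.lift b.circleHom b.reflectionHom fun g ↦
    MonoidHom.ext (b.circleHom_circleInvAction g)

theorem val_pinHom (x : Circle ⋊[circleInvAction] Multiplicative (ZMod 2)) :
    (b.pinHom x : CliffordAlgebra Q) = b.toComplex x.left * (b.reflectionHom x.right : _) := rfl

theorem pinHom_injective : Function.Injective b.pinHom := by
  rw [injective_iff_map_eq_one]
  rintro ⟨z, g⟩ hx
  have hval := congrArg Units.val hx
  rw [val_pinHom, Units.val_one] at hval
  rcases Multiplicative.zmodTwo_cases g with rfl | rfl
  · rw [map_one, Units.val_one, mul_one, ← map_one b.toComplex] at hval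
    have hz : z = 1 := Circle.coe_eq_one.mp (b.toComplex_injective hval)
    rw [hz]
    rfl
  · -- `involute` fixes `toComplex z` and negates `ι e₁`, which would force `-1 = 1`
    exfalso
    simp only [reflectionHom, Multiplicative.zmodTwoHom_ofAdd_one, val_ιUnit] at hval
    have hneg := congrArg involute hval
    rw [map_mul, involute_ι, b.involute_toComplex, mul_neg, hval, map_one,
      ← map_one (algebraMap ℝ _), ← map_neg] at hneg
    exact absurd ((algebraMap ℝ _).injective hneg) (by norm_num)

theorem circleHom_mem_pinGrp (z : Circle) : b.circleHom z ∈ pinGrp Q := by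
  set w := (starRingEnd ℂ) z
  have hw : Q (w.re • b.e₁ + w.im • b.e₂) = 1 := by
    rw [b.apply_smul_add_smul, _root_.sq, _root_.sq, ← Complex.normSq_apply, Complex.normSq_conj,
      Circle.normSq_coe]
  have h : b.circleHom z = ιUnit hw * ιUnit b.apply_e₁ := by
    ext
    rw [Units.val_mul, val_ιUnit, val_ιUnit, ← b.toComplex_conj_mul_ι_e₁, Complex.conj_conj,
      val_circleHom, mul_assoc, b.ι_e₁_mul_self, mul_one]
  rw [h]
  exact mul_mem (ιUnit_mem_pinGrp hw) (ιUnit_mem_pinGrp _)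

theorem reflectionHom_mem_pinGrp (g : Multiplicative (ZMod 2)) :
    b.reflectionHom g ∈ pinGrp Q := by
  rcases Multiplicative.zmodTwo_cases g with rfl | rfl
  · exact one_mem _
  · simpa [reflectionHom] using ιUnit_mem_pinGrp b.apply_e₁

theorem range_pinHom_le : b.pinHom.range ≤ pinGrp Q := by
  rintro _ ⟨x, rfl⟩
  rw [← SemidirectProduct.inl_left_mul_inr_right x, map_mul, pinHom, SemidirectProduct.lift_inl,
    SemidirectProduct.lift_inr]
  exact mul_mem (b.circleHom_mem_pinGrp _) (b.reflectionHom_mem_pinGrp _)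

theorem pinGrp_le_range_pinHom (hspan : Submodule.span ℝ {b.e₁, b.e₂} = ⊤) :
    pinGrp Q ≤ b.pinHom.range := by
  rw [pinGrp, Subgroup.closure_le]
  rintro u ⟨v, hu, hv⟩
  obtain ⟨x, y, rfl⟩ := Submodule.mem_span_pair.mp (hspan ▸ Submodule.mem_top : v ∈ _)
  rw [b.apply_smul_add_smul] at hv
  have hv : x ^ 2 + y ^ 2 = 1 := hv.resolve_right (by nlinarith)
  have hz : ‖(⟨x, y⟩ : ℂ)‖ = 1 := by
    rw [← pow_eq_one_iff_of_nonneg (norm_nonneg _) two_ne_zero, ← Complex.normSq_eq_norm_sq,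
      Complex.normSq_mk]
    linear_combination hv
  let z : Circle := ⟨⟨x, y⟩, mem_sphere_zero_iff_norm.2 hz⟩
  refine ⟨⟨z⁻¹, .ofAdd 1⟩, Units.ext ?_⟩
  rw [val_pinHom, hu, reflectionHom, Multiplicative.zmodTwoHom_ofAdd_one, val_ιUnit,
    Circle.coe_inv_eq_conj, b.toComplex_conj_mul_ι_e₁]

def pinGrpEquiv (hspan : Submodule.span ℝ {b.e₁, b.e₂} = ⊤) :
    Circle ⋊[circleInvAction] Multiplicative (ZMod 2) ≃* pinGrp Q :=
  (MonoidHom.ofInjective b.pinHom_injective).trans <| MulEquiv.subgroupCongr <|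
    le_antisymm b.range_pinHom_le (b.pinGrp_le_range_pinHom hspan)

end OrthonormalPair

theorem Qsig_two_two_apply (v : Fin 2 → ℝ) : Qsig 2 2 v = v 0 ^ 2 + v 1 ^ 2 := by
  simp [Qsig, QuadraticMap.weightedSumSquares_apply, Fin.sum_univ_two, _root_.sq]

def Qsig_two_two_stdPair : OrthonormalPair (Qsig 2 2) where
  e₁ := Pi.single 0 1
  e₂ := Pi.single 1 1
  apply_e₁ := by simp [Qsig_two_two_apply]
  apply_e₂ := by simp [Qsig_two_two_apply]
  isOrtho := by simp [QuadraticMap.isOrtho_def, Qsig_two_two_apply]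

theorem span_Qsig_two_two_stdPair :
    Submodule.span ℝ {Qsig_two_two_stdPair.e₁, Qsig_two_two_stdPair.e₂} = ⊤ := by
  refine eq_top_iff.mpr fun v _ ↦ Submodule.mem_span_pair.mpr ⟨v 0, v 1, ?_⟩
  ext i
  fin_cases i <;> simp [Qsig_two_two_stdPair]

/-- **`Pin⁺_2 ≅ 𝕋 ⋊ ℤ/2`.**
The Pin group `Pin⁺_2 = Pin_{2,0}` of the positive definite form `Q_{2,0}` on `ℝ²` is
isomorphic to the semidirect product `𝕋 ⋊ ℤ/2ℤ`, where the nontrivial element of `ℤ/2ℤ`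
acts on the circle group `𝕋` by inversion. -/
theorem pinPlus_two_iso_circle_rtimes_zmod2 :
    Nonempty (pinGrp (Qsig 2 2) ≃* (Circle ⋊[circleInvAction] Multiplicative (ZMod 2))) :=
  ⟨(Qsig_two_two_stdPair.pinGrpEquiv span_Qsig_two_two_stdPair).symm⟩
end
end
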